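/- Let n ≥ 0 be an integer and let G, Δ, φ ∈ ℂ[[x]] satisfy Δ = [∂]_n(G) and φ = (E−1)·G. Then n·Δ + ∂((E−1)·Δ) = [∂]_{n+1}(φ). (This is identity (4.5): if Δ_λ(x) = [d/dx]_n(φ(x)/(e^x−1)), then F_λ(x) := nΔ_λ(x) + d/dx((e^x−1)Δ_λ(x)) equals [d/dx]_{n+1}φ(x).) -/

import Mathlib

open Polynomial

/-- The derivation `∂ = d/dx` on `ℂ[[x]]`, as a linear endomorphism. -/
noncomputable def Dop : Module.End ℂ (PowerSeries ℂ) :=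
  (PowerSeries.derivative ℂ).toLinearMap

/-- The exponential power series `E = e^x = Σ_{m≥0} x^m/m!`. -/
noncomputable def E : PowerSeries ℂ := PowerSeries.exp ℂ

/-- The falling-factorial polynomial `[w]_n = w(w−1)⋯(w−n+1)` (with `[w]_0 = 1`). -/
noncomputable def ffp (n : ℕ) : ℂ[X] :=
  ∏ i ∈ Finset.range n, (X - C (i : ℂ))

/-- The operator `[∂]_n = ∂(∂−1)⋯(∂−n+1)` on `ℂ[[x]]`: the polynomial `[w]_n`
evaluated at `∂`. -/
noncomputable def ffD (n : ℕ) : Module.End ℂ (PowerSeries ℂ) :=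
  Polynomial.aeval Dop (ffp n)

/-! Since `∂ (e^x f) = e^x (∂ + 1) f`, every polynomial `p(∂)` satisfies
`p(∂)(e^x f) = e^x p(∂ + 1) f`. For `p = [w]_{n+1}` the shifted polynomial is
`[w + 1]_{n+1} = (w + 1)[w]_n`, so `[∂]_{n+1}((e^x − 1) G) = e^x (∂ + 1) Δ − (∂ − n) Δ`
with `Δ = [∂]_n G`, and expanding `∂((e^x − 1) Δ)` by the Leibniz rule gives the same. -/

theorem aeval_mul_eq_mul_aeval_add_one {R A : Type*} [CommSemiring R] [Semiring A]
    [Algebra R A] {D L : A} (h : D * L = L * (D + 1)) (p : R[X]) :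
    aeval D p * L = L * aeval (D + 1) p := by
  induction p using Polynomial.induction_on with
  | C r => simp only [aeval_C, Algebra.commutes]
  | add p q hp hq => simp only [map_add, add_mul, mul_add, hp, hq]
  | monomial k r ih =>
    have hD : ∀ T : A, aeval T (C r * X ^ (k + 1)) = aeval T (C r * X ^ k) * T := by
      simp [pow_succ, mul_assoc]
    rw [hD, hD, mul_assoc, h, ← mul_assoc, ih, mul_assoc]

theorem ffp_succ (n : ℕ) : ffp (n + 1) = ffp n * (X - C (n : ℂ)) :=
  Finset.prod_range_succ _ n

theorem ffp_succ_comp_X_add_one (n : ℕ) : (ffp (n + 1)).comp (X + 1) = (X + 1) * ffp n := by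
  rw [ffp, prod_comp, Finset.prod_range_succ', mul_comm, ffp]
  congr 1
  · simp
  · refine Finset.prod_congr rfl fun i _ => ?_
    rw [sub_comp, X_comp, C_comp, Nat.cast_succ, C_add, C_1]
    ring

theorem Dop_mul (f g : PowerSeries ℂ) : Dop (f * g) = f * Dop g + g * Dop f :=
  (PowerSeries.derivative ℂ).leibniz f g

theorem Dop_E : Dop E = E :=
  PowerSeries.derivative_exp ℂ

theorem Dop_one : Dop 1 = 0 :=
  PowerSeries.derivative_one

theorem Dop_mul_mulLeft_E :
    Dop * LinearMap.mulLeft ℂ E = LinearMap.mulLeft ℂ E * (Dop + 1) := by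
  ext1 f
  simp only [Module.End.mul_apply, LinearMap.mulLeft_apply, LinearMap.add_apply,
    Module.End.one_apply, Dop_mul, Dop_E]
  ring

theorem ffD_succ (n : ℕ) (f : PowerSeries ℂ) :
    ffD (n + 1) f = Dop (ffD n f) - (n : PowerSeries ℂ) * ffD n f := by
  rw [ffD, ffp_succ, mul_comm (ffp n), map_mul, Module.End.mul_apply, ← ffD]
  simp

theorem ffD_succ_E_mul (n : ℕ) (f : PowerSeries ℂ) :
    ffD (n + 1) (E * f) = E * (Dop (ffD n f) + ffD n f) := by
  have shift := congrArg (· f) (aeval_mul_eq_mul_aeval_add_one Dop_mul_mulLeft_E (ffp (n + 1)))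
  simp only [Module.End.mul_apply, LinearMap.mulLeft_apply] at shift
  rw [ffD, shift, ← aeval_X (R := ℂ) Dop, ← map_one (aeval (R := ℂ) Dop), ← map_add,
    ← aeval_comp, ffp_succ_comp_X_add_one, map_mul, Module.End.mul_apply, ← ffD]
  simp

/-- identity (4.5): if `Δ = [∂]_n G` and `φ = (E−1)·G`, then
`n·Δ + ∂((E−1)·Δ) = [∂]_{n+1} φ`. -/
theorem stmt15 (n : ℕ) (G Δ φ : PowerSeries ℂ)
    (hΔ : Δ = ffD n G) (hφ : φ = (E - 1) * G) :
    (n : PowerSeries ℂ) * Δ + Dop ((E - 1) * Δ) = ffD (n + 1) φ := by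
  subst hΔ hφ
  rw [sub_mul E 1 G, one_mul, map_sub, ffD_succ_E_mul, ffD_succ, Dop_mul, map_sub, Dop_E, Dop_one]
  ring
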